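/- Assume 𝓜 ⊆ M_n(ℝ) is bounded and the switched system (Σ_𝓜) is uniformly stable. Then the function V(x) = sup { ‖Φ_A(t,0)x‖ : t ≥ 0, A a switching law } is finite-valued, convex, absolutely homogeneous of degree one, and is a nonstrict common Lyapunov function for (Σ_𝓜). -/

import Mathlib

open MeasureTheory Set
open scoped RealInnerProductSpace

noncomputable section

attribute [local instance] Matrix.normedAddCommGroup Matrix.normedSpace

local instance matrixMeasurableSpace {n : ℕ} :
    MeasurableSpace (Matrix (Fin n) (Fin n) ℝ) :=
  inferInstanceAs (MeasurableSpace (Fin n → Fin n → ℝ))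

/-- The space of `n × n` real matrices. -/
abbrev Mat (n : ℕ) := Matrix (Fin n) (Fin n) ℝ

/-- The state space `ℝⁿ` with its Euclidean structure. -/
abbrev Vec (n : ℕ) := EuclideanSpace ℝ (Fin n)

/-- Action of a matrix on a vector of Euclidean space. -/
def Mat.act {n : ℕ} (M : Mat n) (x : Vec n) : Vec n := Matrix.toEuclideanLin M x

/-- A switching law for the switched system `(Σ_𝓜)`: a measurable function taking values in `𝓜`. -/
def IsSwitchingLaw {n : ℕ} (𝓜 : Set (Mat n)) (A : ℝ → Mat n) : Prop :=
  Measurable A ∧ ∀ t, 0 ≤ t → A t ∈ 𝓜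

/-- `Φ` is the fundamental matrix `t ↦ Φ_A(t,0)` of the switching law `A`: the continuous
solution on `[0,∞)` of `Φ(t) = Id + ∫₀ᵗ A(s) Φ(s) ds`. -/
def IsFundamentalMatrix {n : ℕ} (A : ℝ → Mat n) (Φ : ℝ → Mat n) : Prop :=
  ContinuousOn Φ (Ici (0:ℝ)) ∧
  ∀ t, 0 ≤ t → Φ t = 1 + ∫ s in (0:ℝ)..t, A s * Φ s

/-- Uniform stability of the switched system `(Σ_𝓜)`. -/
def UniformlyStable {n : ℕ} (𝓜 : Set (Mat n)) : Prop :=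
  ∃ C > 0, ∀ A Φ : ℝ → Mat n, IsSwitchingLaw 𝓜 A → IsFundamentalMatrix A Φ →
    ∀ t, 0 ≤ t → ‖Φ t‖ ≤ C

/-- Uniform exponential stability of the switched system `(Σ_𝓜)`. -/
def UniformlyExpStable {n : ℕ} (𝓜 : Set (Mat n)) : Prop :=
  ∃ C > 0, ∃ γ > 0, ∀ A Φ : ℝ → Mat n, IsSwitchingLaw 𝓜 A → IsFundamentalMatrix A Φ →
    ∀ t, 0 ≤ t → ‖Φ t‖ ≤ C * Real.exp (-γ * t)

/-- A nonstrict common Lyapunov function for `(Σ_𝓜)`: continuous, nonnegative, positive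
definite, and non-increasing along every trajectory. -/
def IsNonstrictCLF {n : ℕ} (𝓜 : Set (Mat n)) (V : Vec n → ℝ) : Prop :=
  Continuous V ∧ (∀ x, 0 ≤ V x) ∧ V 0 = 0 ∧ (∀ x, x ≠ 0 → 0 < V x) ∧
  ∀ A Φ : ℝ → Mat n, IsSwitchingLaw 𝓜 A → IsFundamentalMatrix A Φ → ∀ x₀ : Vec n,
    AntitoneOn (fun t => V ((Φ t).act x₀)) (Ici 0)

/-- A (strict) common Lyapunov function for `(Σ_𝓜)`: a nonstrict one that is moreover
strictly decreasing along every nonzero trajectory. -/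
def IsCLF {n : ℕ} (𝓜 : Set (Mat n)) (V : Vec n → ℝ) : Prop :=
  IsNonstrictCLF 𝓜 V ∧
  ∀ A Φ : ℝ → Mat n, IsSwitchingLaw 𝓜 A → IsFundamentalMatrix A Φ → ∀ x₀ : Vec n, x₀ ≠ 0 →
    StrictAntiOn (fun t => V ((Φ t).act x₀)) (Ici 0)

/-- A universal class of Lyapunov functions. -/
def IsUniversalClass {n : ℕ} (P : Set (Vec n → ℝ)) : Prop :=
  ∀ 𝓜 : Set (Mat n), Bornology.IsBounded 𝓜 → UniformlyExpStable 𝓜 →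
    ∃ V ∈ P, IsCLF 𝓜 V

/-- `V` is absolutely homogeneous of degree `α`. -/
def AbsHomog {n : ℕ} (α : ℝ) (V : Vec n → ℝ) : Prop :=
  ∀ (lam : ℝ) (x : Vec n), V (lam • x) = |lam| ^ α * V x

/-- The subdifferential of a convex function. -/
def subdiff {n : ℕ} (V : Vec n → ℝ) (x : Vec n) : Set (Vec n) :=
  {l | ∀ y, ⟪l, y - x⟫ ≤ V y - V x}

/-- The set of values `‖Φ_A(t,0) x‖` over all switching laws `A` and times `t ≥ 0`. -/
def trajNorms {n : ℕ} (M : Set (Mat n)) (x : Vec n) : Set ℝ :=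
  {r : ℝ | ∃ (A Φ : ℝ → Mat n) (t : ℝ),
    IsSwitchingLaw M A ∧ IsFundamentalMatrix A Φ ∧ 0 ≤ t ∧ r = ‖(Φ t).act x‖}

/-! Uniform stability bounds every `‖Φ_A(t,0) x‖` by `K ‖x‖`. Hence `V`, a supremum of the
seminorms `x ↦ ‖Φ_A(t,0) x‖`, is a seminorm squeezed between `‖·‖` (take `t = 0`) and
`K ‖·‖`: convex, absolutely homogeneous, continuous and positive definite. It decreases along
trajectories because trajectories can be concatenated: following `A` from time `s` to `t` and
then an arbitrary law `B` is a trajectory issued from `Φ_A(s,0) x`. Writing it as a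
fundamental matrix uses `Φ_A(r,0) Φ_A(s,0)⁻¹`, and `Φ_A(s,0)` is invertible by a backward
Grönwall argument. -/

/-- Grönwall's inequality in backward integral form. -/
lemma le_mul_exp_of_le_add_integral {g : ℝ → ℝ} (hg : Continuous g) {a C t₀ t : ℝ}
    (hC : 0 ≤ C) (ht : t₀ ≤ t) (h : ∀ σ ∈ Icc t₀ t, g σ ≤ a + C * ∫ r in σ..t, g r) :
    g t₀ ≤ a * Real.exp (C * (t - t₀)) := by
  set H : ℝ → ℝ := fun σ => a + C * ∫ r in σ..t, g r
  have hH : ∀ σ, HasDerivAt H (C * -g σ) σ := fun σ =>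
    ((intervalIntegral.integral_hasDerivAt_left (hg.intervalIntegrable σ t)
      (hg.stronglyMeasurableAtFilter _ _) hg.continuousAt).const_mul C).const_add a
  -- `H σ * exp (C σ)` is nondecreasing as long as `g ≤ H`.
  set P : ℝ → ℝ := fun σ => H σ * Real.exp (C * σ)
  have hP : ∀ σ, HasDerivAt P (C * Real.exp (C * σ) * (H σ - g σ)) σ := fun σ =>
    ((hH σ).mul (((hasDerivAt_id σ).const_mul C).exp)).congr_deriv (by simp only [id]; ring)
  have hmono : MonotoneOn P (Icc t₀ t) :=
    monotoneOn_of_hasDerivWithinAt_nonneg (convex_Icc t₀ t)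
      (fun σ _ => (hP σ).continuousAt.continuousWithinAt) (fun σ _ => (hP σ).hasDerivWithinAt)
      (fun σ hσ => mul_nonneg (by positivity) (sub_nonneg.2 (h σ (interior_subset hσ))))
  calc g t₀ ≤ H t₀ := h t₀ ⟨le_rfl, ht⟩
    _ = P t₀ * Real.exp (-(C * t₀)) := by simp only [P, mul_assoc, ← Real.exp_add]; simp
    _ ≤ P t * Real.exp (-(C * t₀)) := by gcongr; exact hmono ⟨le_rfl, ht⟩ ⟨ht, le_rfl⟩ ht
    _ = a * Real.exp (C * (t - t₀)) := by
        simp only [P, H, intervalIntegral.integral_same, mul_zero, add_zero, mul_assoc,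
          ← Real.exp_add]
        ring_nf

/-- The topology of the local sup norm on `Mat n`; it agrees with the product topology
`instTopologicalSpaceMatrix` only up to unfolding, which instance search does not do. -/
local instance matrixNormTopology {n : ℕ} : TopologicalSpace (Mat n) :=
  (Matrix.normedAddCommGroup : NormedAddCommGroup (Mat n)).toUniformSpace.toTopologicalSpace

local instance matrixContinuousMul {n : ℕ} : ContinuousMul (Mat n) :=
  (inferInstance : @ContinuousMul (Matrix (Fin n) (Fin n) ℝ) instTopologicalSpaceMatrix _)

local instance matrixBorelSpace {n : ℕ} : BorelSpace (Mat n) := Pi.borelSpace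

namespace Mat
variable {n : ℕ}

def toCLM (n : ℕ) : Mat n ≃L[ℝ] (Vec n →L[ℝ] Vec n) :=
  (Matrix.toEuclideanCLM (𝕜 := ℝ) (n := Fin n)).toAlgEquiv.toLinearEquiv.toContinuousLinearEquiv

lemma act_eq_toCLM (M : Mat n) (x : Vec n) : M.act x = toCLM n M x := rfl

lemma toCLM_mul (X Y : Mat n) : toCLM n (X * Y) = toCLM n X * toCLM n Y :=
  map_mul (Matrix.toEuclideanCLM (𝕜 := ℝ) (n := Fin n)) X Y

lemma toCLM_one : toCLM n 1 = 1 := map_one (Matrix.toEuclideanCLM (𝕜 := ℝ) (n := Fin n))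

@[simp] lemma act_one (x : Vec n) : Mat.act 1 x = x := by
  rw [act_eq_toCLM, toCLM_one]; rfl

lemma act_mul (X Y : Mat n) (x : Vec n) : Mat.act (X * Y) x = X.act (Y.act x) := by
  simp only [act_eq_toCLM, toCLM_mul]; rfl

lemma act_add (M : Mat n) (x y : Vec n) : M.act (x + y) = M.act x + M.act y :=
  map_add (toCLM n M) x y

lemma act_sub (M : Mat n) (x y : Vec n) : M.act (x - y) = M.act x - M.act y :=
  map_sub (toCLM n M) x y

lemma act_smul (M : Mat n) (a : ℝ) (x : Vec n) : M.act (a • x) = a • M.act x :=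
  map_smul (toCLM n M) a x

lemma act_toLp (X : Mat n) (v : Fin n → ℝ) :
    X.act (WithLp.toLp 2 v) = WithLp.toLp 2 (X.mulVec v) :=
  rfl

def evalCLM (x : Vec n) : Mat n →L[ℝ] Vec n :=
  (ContinuousLinearMap.apply ℝ (Vec n) x).comp (toCLM n : Mat n →L[ℝ] Vec n →L[ℝ] Vec n)

@[simp] lemma evalCLM_apply (x : Vec n) (M : Mat n) : evalCLM x M = M.act x := rfl

lemma exists_norm_act_le (n : ℕ) :
    ∃ c, 0 ≤ c ∧ ∀ (M : Mat n) (x : Vec n), ‖M.act x‖ ≤ c * ‖M‖ * ‖x‖ := by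
  set e : Mat n →L[ℝ] Vec n →L[ℝ] Vec n := (toCLM n).toContinuousLinearMap
  refine ⟨‖e‖, by positivity, fun M x => ?_⟩
  calc ‖M.act x‖ ≤ ‖e M‖ * ‖x‖ := (e M).le_opNorm x
    _ ≤ ‖e‖ * ‖M‖ * ‖x‖ := by gcongr; exact e.le_opNorm M

/-- The entrywise sup norm is not submultiplicative, but it is up to a constant. -/
lemma exists_norm_mul_le (n : ℕ) : ∃ c, 0 ≤ c ∧ ∀ X Y : Mat n, ‖X * Y‖ ≤ c * ‖X‖ * ‖Y‖ := by
  set e : Mat n →L[ℝ] Vec n →L[ℝ] Vec n := (toCLM n).toContinuousLinearMap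
  set e' : (Vec n →L[ℝ] Vec n) →L[ℝ] Mat n := (toCLM n).symm.toContinuousLinearMap
  refine ⟨‖e'‖ * ‖e‖ * ‖e‖, by positivity, fun X Y => ?_⟩
  have hXY : X * Y = e' (e X * e Y) := by
    simp only [e, e', ContinuousLinearEquiv.coe_coe, ← toCLM_mul,
      ContinuousLinearEquiv.symm_apply_apply]
  calc ‖X * Y‖ ≤ ‖e'‖ * ‖e X * e Y‖ := hXY ▸ e'.le_opNorm _
    _ ≤ ‖e'‖ * (‖e X‖ * ‖e Y‖) := by gcongr; exact norm_mul_le _ _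
    _ ≤ ‖e'‖ * ((‖e‖ * ‖X‖) * (‖e‖ * ‖Y‖)) := by
        gcongr <;> exact e.le_opNorm _
    _ = ‖e'‖ * ‖e‖ * ‖e‖ * ‖X‖ * ‖Y‖ := by ring

end Mat

section FundamentalMatrix
variable {n : ℕ} {M : Set (Mat n)} {A Φ : ℝ → Mat n}

lemma IsSwitchingLaw.intervalIntegrable_mul (hM : Bornology.IsBounded M)
    (hA : IsSwitchingLaw M A) (hΦ : ContinuousOn Φ (Ici 0)) {a b : ℝ} (ha : 0 ≤ a) (hb : 0 ≤ b) :
    IntervalIntegrable (fun s => A s * Φ s) volume a b := by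
  obtain ⟨R, hR⟩ := isBounded_iff_forall_norm_le.1 hM
  obtain ⟨c, hc, hmul⟩ := Mat.exists_norm_mul_le n
  have hsub : uIcc a b ⊆ Ici 0 := fun s hs => (le_min ha hb).trans hs.1
  obtain ⟨K, hK⟩ := isCompact_uIcc.exists_bound_of_continuousOn (hΦ.mono hsub)
  rw [intervalIntegrable_iff]
  refine Integrable.mono' (integrableOn_const (C := c * R * K) measure_Ioc_lt_top.ne)
    (hA.1.aestronglyMeasurable.mul
      ((hΦ.mono (uIoc_subset_uIcc.trans hsub)).aestronglyMeasurable measurableSet_uIoc))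
    (ae_restrict_of_forall_mem measurableSet_uIoc fun s hs => ?_)
  have hAs : ‖A s‖ ≤ R := hR _ (hA.2 s (hsub (uIoc_subset_uIcc hs)))
  calc ‖A s * Φ s‖ ≤ c * ‖A s‖ * ‖Φ s‖ := hmul _ _
    _ ≤ c * R * K := by
        gcongr
        · exact mul_nonneg hc ((norm_nonneg _).trans hAs)
        · exact hK s (uIoc_subset_uIcc hs)

lemma IsFundamentalMatrix.apply_zero (hΦ : IsFundamentalMatrix A Φ) : Φ 0 = 1 := by
  simpa using hΦ.2 0 le_rfl

lemma IsFundamentalMatrix.eq_add_integral (hM : Bornology.IsBounded M)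
    (hA : IsSwitchingLaw M A) (hΦ : IsFundamentalMatrix A Φ) {a b : ℝ} (ha : 0 ≤ a)
    (hb : 0 ≤ b) : Φ b = Φ a + ∫ s in a..b, A s * Φ s := by
  rw [hΦ.2 b hb, hΦ.2 a ha, add_assoc, intervalIntegral.integral_add_adjacent_intervals
    (hA.intervalIntegrable_mul hM hΦ.1 le_rfl ha) (hA.intervalIntegrable_mul hM hΦ.1 ha hb)]

lemma IsFundamentalMatrix.act_eq_add_integral (hM : Bornology.IsBounded M)
    (hA : IsSwitchingLaw M A) (hΦ : IsFundamentalMatrix A Φ) (x : Vec n) {a b : ℝ}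
    (ha : 0 ≤ a) (hb : 0 ≤ b) :
    (Φ b).act x = (Φ a).act x + ∫ s in a..b, (A s).act ((Φ s).act x) := by
  have h := congrArg (Mat.evalCLM x) (hΦ.eq_add_integral hM hA ha hb)
  rw [map_add, ← (Mat.evalCLM x).intervalIntegral_comp_comm
    (hA.intervalIntegrable_mul hM hΦ.1 ha hb)] at h
  simpa only [Mat.evalCLM_apply, Mat.act_mul] using h

lemma exists_isFundamentalMatrix_const (X : Mat n) :
    ∃ Φ : ℝ → Mat n, IsFundamentalMatrix (fun _ => X) Φ := by
  set e := Mat.toCLM n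
  set F : ℝ → (Vec n →L[ℝ] Vec n) := fun τ => NormedSpace.exp (τ • e X)
  have hF : ∀ τ, HasDerivAt F (e X * F τ) τ := hasDerivAt_exp_smul_const' (e X)
  have hFc : Continuous F := continuous_iff_continuousAt.2 fun τ => (hF τ).continuousAt
  have hF0 : F 0 = 1 := by simp only [F, zero_smul ℝ (e X), NormedSpace.exp_zero]
  have he_mul : ∀ L, e.symm (e X * L) = X * e.symm L := fun L => e.injective (by
    rw [ContinuousLinearEquiv.apply_symm_apply, Mat.toCLM_mul,
      ContinuousLinearEquiv.apply_symm_apply])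
  refine ⟨fun τ => e.symm (F τ), (e.symm.continuous.comp hFc).continuousOn, fun t _ => ?_⟩
  have hint : IntervalIntegrable (fun τ => e X * F τ) volume 0 t :=
    (continuous_const.mul hFc).intervalIntegrable _ _
  have hFTC := intervalIntegral.integral_eq_sub_of_hasDerivAt (fun τ _ => hF τ) hint
  have he_one : e.symm 1 = 1 := e.injective (by
    rw [ContinuousLinearEquiv.apply_symm_apply, Mat.toCLM_one])
  have h := (e.symm : (Vec n →L[ℝ] Vec n) →L[ℝ] Mat n).intervalIntegral_comp_comm hint
  simp only [ContinuousLinearEquiv.coe_coe, he_mul, hFTC, map_sub, hF0, he_one] at h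
  show e.symm (F t) = 1 + ∫ s in (0:ℝ)..t, X * e.symm (F s)
  rw [h, add_sub_cancel]

/-- Backward uniqueness: if `Φ(t) x = 0`, then `‖Φ(σ) x‖ ≤ c R ∫_σ^t ‖Φ(r) x‖ dr` on `[0, t]`,
where `R` bounds `M`, and Grönwall forces `x = 0`. -/
lemma IsFundamentalMatrix.eq_zero_of_act_eq_zero (hM : Bornology.IsBounded M)
    (hA : IsSwitchingLaw M A) (hΦ : IsFundamentalMatrix A Φ) {t : ℝ} {x : Vec n} (ht : 0 ≤ t)
    (h : (Φ t).act x = 0) : x = 0 := by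
  obtain ⟨R, hR⟩ := isBounded_iff_forall_norm_le.1 hM
  have hR0 : 0 ≤ R := (norm_nonneg _).trans (hR _ (hA.2 0 le_rfl))
  obtain ⟨c, hc, hact⟩ := Mat.exists_norm_act_le n
  set g : ℝ → ℝ := fun σ => ‖(Φ (max σ 0)).act x‖
  have hg : Continuous g :=
    (((Mat.evalCLM x).continuous.comp_continuousOn hΦ.1).comp_continuous
      (continuous_id.max continuous_const) fun σ => le_max_right σ 0).norm
  have hgσ : ∀ σ, 0 ≤ σ → g σ = ‖(Φ σ).act x‖ := fun σ hσ => by simp only [g, max_eq_left hσ]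
  have key : ∀ σ ∈ Icc 0 t, g σ ≤ 0 + c * R * ∫ r in σ..t, g r := by
    intro σ hσ
    have heq := hΦ.act_eq_add_integral hM hA x hσ.1 ht
    rw [h, eq_comm, add_eq_zero_iff_eq_neg] at heq
    rw [hgσ σ hσ.1, heq, norm_neg, zero_add, ← intervalIntegral.integral_const_mul]
    refine intervalIntegral.norm_integral_le_of_norm_le hσ.2
      (Filter.Eventually.of_forall fun r hr => ?_) ((hg.intervalIntegrable _ _).const_mul _)
    have hr0 : 0 ≤ r := hσ.1.trans hr.1.le
    calc ‖(A r).act ((Φ r).act x)‖ ≤ c * ‖A r‖ * ‖(Φ r).act x‖ := hact _ _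
      _ ≤ c * R * g r := by rw [hgσ r hr0]; gcongr; exact hR _ (hA.2 r hr0)
  have hx := le_mul_exp_of_le_add_integral hg (by positivity) ht key
  rw [zero_mul, hgσ 0 le_rfl, hΦ.apply_zero, Mat.act_one] at hx
  exact norm_le_zero_iff.1 hx

lemma IsFundamentalMatrix.isUnit (hM : Bornology.IsBounded M) (hA : IsSwitchingLaw M A)
    (hΦ : IsFundamentalMatrix A Φ) {t : ℝ} (ht : 0 ≤ t) : IsUnit (Φ t) := by
  rw [← Matrix.mulVec_injective_iff_isUnit]
  intro v w hvw
  have h0 : (Φ t).act (WithLp.toLp 2 v - WithLp.toLp 2 w) = 0 := by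
    rw [Mat.act_sub, Mat.act_toLp, Mat.act_toLp, hvw, sub_self]
  exact WithLp.toLp_injective 2 (sub_eq_zero.1 (hΦ.eq_zero_of_act_eq_zero hM hA ht h0))

end FundamentalMatrix

def switchAt {α : Type*} (d : ℝ) (f g : ℝ → α) : ℝ → α :=
  fun r => if r ≤ d then f r else g (r - d)

section Concatenation
variable {n : ℕ} {M : Set (Mat n)} {A B Φ Ψ : ℝ → Mat n} {d : ℝ}

lemma switchAt_of_le {α : Type*} {f g : ℝ → α} {r : ℝ} (h : r ≤ d) : switchAt d f g r = f r :=
  if_pos h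

lemma switchAt_of_lt {α : Type*} {f g : ℝ → α} {r : ℝ} (h : d < r) :
    switchAt d f g r = g (r - d) :=
  if_neg h.not_ge

lemma IsSwitchingLaw.switchAt (hA : IsSwitchingLaw M A) (hB : IsSwitchingLaw M B) :
    IsSwitchingLaw M (switchAt d A B) := by
  refine ⟨Measurable.ite (measurableSet_le measurable_id measurable_const) hA.1
    (hB.1.comp (measurable_sub_const d)), fun r hr => ?_⟩
  rcases le_or_gt r d with h | h
  · rw [switchAt_of_le h]; exact hA.2 r hr
  · rw [switchAt_of_lt h]; exact hB.2 _ (sub_nonneg.2 h.le)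

lemma IsSwitchingLaw.comp_add_const (hA : IsSwitchingLaw M A) {s : ℝ} (hs : 0 ≤ s) :
    IsSwitchingLaw M (fun r => A (r + s)) :=
  ⟨hA.1.comp (measurable_add_const s), fun _ hr => hA.2 _ (add_nonneg hr hs)⟩

lemma Mat.intervalIntegral_mul_const {f : ℝ → Mat n} {a b : ℝ}
    (hf : IntervalIntegrable f volume a b) (X : Mat n) :
    ∫ r in a..b, f r * X = (∫ r in a..b, f r) * X :=
  (LinearMap.toContinuousLinearMap (LinearMap.mulRight ℝ X)).intervalIntegral_comp_comm hf

lemma IsFundamentalMatrix.switchAt_of_ge (hΨ : IsFundamentalMatrix B Ψ) {r : ℝ} (h : d ≤ r) :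
    switchAt d Φ (fun r => Ψ r * Φ d) r = Ψ (r - d) * Φ d := by
  rcases h.eq_or_lt with rfl | h
  · rw [switchAt_of_le le_rfl, sub_self, hΨ.apply_zero, one_mul]
  · exact switchAt_of_lt h

lemma isFundamentalMatrix_switchAt (hM : Bornology.IsBounded M) (hA : IsSwitchingLaw M A)
    (hB : IsSwitchingLaw M B) (hΦ : IsFundamentalMatrix A Φ) (hΨ : IsFundamentalMatrix B Ψ)
    (hd : 0 ≤ d) : IsFundamentalMatrix (switchAt d A B) (switchAt d Φ fun r => Ψ r * Φ d) := by
  have hC : IsSwitchingLaw M (switchAt d A B) := hA.switchAt hB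
  have hcont : ContinuousOn (switchAt d Φ fun r => Ψ r * Φ d) (Ici 0) := by
    have h₁ : ContinuousOn (switchAt d Φ fun r => Ψ r * Φ d) (Icc 0 d) :=
      (hΦ.1.mono Icc_subset_Ici_self).congr fun r hr => switchAt_of_le hr.2
    have h₂ : ContinuousOn (switchAt d Φ fun r => Ψ r * Φ d) (Ici d) := by
      refine ContinuousOn.congr (f := fun r => Ψ (r - d) * Φ d) ?_ fun r hr => hΨ.switchAt_of_ge hr
      exact (hΨ.1.comp (continuous_sub_right d).continuousOn
        fun _ hr => sub_nonneg.2 (mem_Ici.1 hr)).mul continuousOn_const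
    exact (h₁.union_of_isClosed h₂ isClosed_Icc isClosed_Ici).mono fun r hr =>
      (le_or_gt r d).imp (fun h => ⟨hr, h⟩) le_of_lt
  have hfirst : ∀ τ, 0 ≤ τ → τ ≤ d → ∫ r in (0:ℝ)..τ, switchAt d A B r *
      switchAt d Φ (fun r => Ψ r * Φ d) r = ∫ r in (0:ℝ)..τ, A r * Φ r := fun τ hτ hτd =>
    intervalIntegral.integral_congr_ae (Filter.Eventually.of_forall fun r hr => by
      rw [uIoc_of_le hτ] at hr
      rw [switchAt_of_le (hr.2.trans hτd), switchAt_of_le (hr.2.trans hτd)])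
  refine ⟨hcont, fun τ hτ => ?_⟩
  rcases le_or_gt τ d with hτd | hdτ
  · rw [switchAt_of_le hτd, hfirst τ hτ hτd, ← hΦ.2 τ hτ]
  have hsecond : ∫ r in d..τ, switchAt d A B r * switchAt d Φ (fun r => Ψ r * Φ d) r =
      (Ψ (τ - d) - 1) * Φ d := by
    calc _ = ∫ r in d..τ, B (r - d) * Ψ (r - d) * Φ d :=
          intervalIntegral.integral_congr_ae (Filter.Eventually.of_forall fun r hr => by
            rw [uIoc_of_le hdτ.le] at hr
            rw [switchAt_of_lt hr.1, switchAt_of_lt hr.1, mul_assoc])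
      _ = ∫ r in (0:ℝ)..τ - d, B r * Ψ r * Φ d := by
          simpa using intervalIntegral.integral_comp_sub_right (a := d) (b := τ)
            (fun r => B r * Ψ r * Φ d) d
      _ = (Ψ (τ - d) - 1) * Φ d := by
          rw [Mat.intervalIntegral_mul_const
            (hB.intervalIntegrable_mul hM hΨ.1 le_rfl (sub_nonneg.2 hdτ.le)),
            hΨ.2 (τ - d) (sub_nonneg.2 hdτ.le), add_sub_cancel_left]
  rw [hΨ.switchAt_of_ge hdτ.le, ← intervalIntegral.integral_add_adjacent_intervals
    (hC.intervalIntegrable_mul hM hcont le_rfl hd) (hC.intervalIntegrable_mul hM hcont hd hτ),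
    hfirst d hd le_rfl, hsecond, eq_sub_of_add_eq' (hΦ.2 d hd).symm, sub_mul, one_mul]
  abel

lemma IsFundamentalMatrix.comp_add_const (hM : Bornology.IsBounded M) (hA : IsSwitchingLaw M A)
    (hΦ : IsFundamentalMatrix A Φ) {s : ℝ} (hs : 0 ≤ s) :
    IsFundamentalMatrix (fun r => A (r + s)) (fun r => Φ (r + s) * (Φ s)⁻¹) := by
  have hdet : IsUnit (Φ s).det := (Matrix.isUnit_iff_isUnit_det _).1 (hΦ.isUnit hM hA hs)
  have hcont : ContinuousOn (fun r => Φ (r + s)) (Ici 0) :=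
    hΦ.1.comp (continuous_add_const s).continuousOn fun r hr => add_nonneg hr hs
  refine ⟨hcont.mul continuousOn_const, fun τ hτ => ?_⟩
  calc Φ (τ + s) * (Φ s)⁻¹ = 1 + (Φ (τ + s) - Φ s) * (Φ s)⁻¹ := by
        rw [sub_mul, Matrix.mul_nonsing_inv _ hdet]; abel
    _ = 1 + (∫ r in (0:ℝ)..τ, A (r + s) * Φ (r + s)) * (Φ s)⁻¹ := by
        rw [hΦ.eq_add_integral hM hA hs (add_nonneg hτ hs), add_sub_cancel_left,
          intervalIntegral.integral_comp_add_right (fun r => A r * Φ r), zero_add]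
    _ = 1 + ∫ r in (0:ℝ)..τ, A (r + s) * (Φ (r + s) * (Φ s)⁻¹) := by
        rw [← Mat.intervalIntegral_mul_const
          ((hA.comp_add_const hs).intervalIntegrable_mul hM hcont le_rfl hτ)]
        simp only [mul_assoc]

/-- A trajectory issued from `Φ(t) x` extends backwards to one issued from `Φ(s) x`: run the
shifted law `A(· + s)` for time `t - s`, then switch. -/
lemma trajNorms_act_subset (hM : Bornology.IsBounded M) (hA : IsSwitchingLaw M A)
    (hΦ : IsFundamentalMatrix A Φ) {s t : ℝ} (hs : 0 ≤ s) (hst : s ≤ t) (x : Vec n) :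
    trajNorms M ((Φ t).act x) ⊆ trajNorms M ((Φ s).act x) := by
  rintro _ ⟨B, Ψ, u, hB, hΨ, hu, rfl⟩
  have hdet : IsUnit (Φ s).det := (Matrix.isUnit_iff_isUnit_det _).1 (hΦ.isUnit hM hA hs)
  have hshift := hΦ.comp_add_const hM hA hs
  refine ⟨_, _, u + (t - s), (hA.comp_add_const hs).switchAt hB,
    isFundamentalMatrix_switchAt hM (hA.comp_add_const hs) hB hshift hΨ (sub_nonneg.2 hst),
    by linarith, ?_⟩
  rw [hΨ.switchAt_of_ge (le_add_of_nonneg_left hu), add_sub_cancel_right, sub_add_cancel,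
    Mat.act_mul, Mat.act_mul, ← Mat.act_mul _ (Φ s), Matrix.nonsing_inv_mul _ hdet, Mat.act_one]

end Concatenation

def trajSup {n : ℕ} (M : Set (Mat n)) (x : Vec n) : ℝ := sSup (trajNorms M x)

section TrajSup
variable {n : ℕ} {M : Set (Mat n)}

open scoped Pointwise

lemma norm_mem_trajNorms (hM : M.Nonempty) (x : Vec n) : ‖x‖ ∈ trajNorms M x := by
  obtain ⟨X, hX⟩ := hM
  obtain ⟨Φ, hΦ⟩ := exists_isFundamentalMatrix_const X
  exact ⟨_, Φ, 0, ⟨measurable_const, fun _ _ => hX⟩, hΦ, le_rfl, by rw [hΦ.apply_zero, Mat.act_one]⟩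

lemma trajNorms_smul (a : ℝ) (x : Vec n) : trajNorms M (a • x) = |a| • trajNorms M x := by
  ext r
  simp only [trajNorms, Set.mem_smul_set, mem_ofPred_eq, Mat.act_smul, norm_smul,
    Real.norm_eq_abs, smul_eq_mul]
  constructor
  · rintro ⟨A, Φ, t, hA, hΦ, ht, rfl⟩
    exact ⟨_, ⟨A, Φ, t, hA, hΦ, ht, rfl⟩, rfl⟩
  · rintro ⟨_, ⟨A, Φ, t, hA, hΦ, ht, rfl⟩, rfl⟩
    exact ⟨A, Φ, t, hA, hΦ, ht, rfl⟩

lemma trajSup_smul (a : ℝ) (x : Vec n) : trajSup M (a • x) = |a| * trajSup M x := by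
  rw [trajSup, trajNorms_smul, Real.sSup_smul_of_nonneg (abs_nonneg a), smul_eq_mul, trajSup]

lemma trajSup_nonneg (x : Vec n) : 0 ≤ trajSup M x :=
  Real.sSup_nonneg fun _ ⟨_, _, _, _, _, _, hr⟩ => hr ▸ norm_nonneg _

lemma UniformlyStable.exists_forall_mem_trajNorms_le (h : UniformlyStable M) :
    ∃ K : NNReal, ∀ x, ∀ r ∈ trajNorms M x, r ≤ K * ‖x‖ := by
  obtain ⟨C, hC, hΦ⟩ := h
  obtain ⟨c, hc, hact⟩ := Mat.exists_norm_act_le n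
  refine ⟨⟨c * C, by positivity⟩, fun x r ⟨A, Φ, t, hA, hΦA, ht, hr⟩ => ?_⟩
  calc r ≤ c * ‖Φ t‖ * ‖x‖ := hr ▸ hact _ _
    _ ≤ c * C * ‖x‖ := by gcongr; exact hΦ A Φ hA hΦA t ht

lemma UniformlyStable.bddAbove_trajNorms (h : UniformlyStable M) (x : Vec n) :
    BddAbove (trajNorms M x) :=
  let ⟨K, hK⟩ := h.exists_forall_mem_trajNorms_le
  ⟨K * ‖x‖, hK x⟩

lemma UniformlyStable.norm_act_le_trajSup (h : UniformlyStable M) {A Φ : ℝ → Mat n}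
    (hA : IsSwitchingLaw M A) (hΦ : IsFundamentalMatrix A Φ) {t : ℝ} (ht : 0 ≤ t)
    (x : Vec n) : ‖(Φ t).act x‖ ≤ trajSup M x :=
  le_csSup (h.bddAbove_trajNorms x) ⟨A, Φ, t, hA, hΦ, ht, rfl⟩

lemma UniformlyStable.trajSup_add_le (h : UniformlyStable M) (x y : Vec n) :
    trajSup M (x + y) ≤ trajSup M x + trajSup M y := by
  refine Real.sSup_le (fun _ ⟨A, Φ, t, hA, hΦ, ht, hr⟩ => ?_)
    (add_nonneg (trajSup_nonneg x) (trajSup_nonneg y))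
  rw [hr, Mat.act_add]
  exact (norm_add_le _ _).trans
    (add_le_add (h.norm_act_le_trajSup hA hΦ ht x) (h.norm_act_le_trajSup hA hΦ ht y))

def UniformlyStable.trajSeminorm (h : UniformlyStable M) : Seminorm ℝ (Vec n) :=
  Seminorm.of (trajSup M) h.trajSup_add_le fun a x => by
    rw [trajSup_smul, Real.norm_eq_abs]

lemma UniformlyStable.continuous_trajSup (h : UniformlyStable M) : Continuous (trajSup M) := by
  obtain ⟨K, hK⟩ := h.exists_forall_mem_trajNorms_le
  refine Seminorm.continuous_of_le (p := h.trajSeminorm) (q := K • normSeminorm ℝ (Vec n))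
    ?_ fun x => ?_
  · simpa only [FunLike.coe_smul, coe_normSeminorm] using continuous_norm.const_smul K
  · rw [smul_apply, coe_normSeminorm, NNReal.smul_def, smul_eq_mul]
    exact Real.sSup_le (hK x) (by positivity)

lemma norm_le_trajSup (hM : M.Nonempty) (h : UniformlyStable M) (x : Vec n) :
    ‖x‖ ≤ trajSup M x :=
  le_csSup (h.bddAbove_trajNorms x) (norm_mem_trajNorms hM x)

lemma UniformlyStable.antitoneOn_trajSup_act (h : UniformlyStable M) (hM : Bornology.IsBounded M)
    {A Φ : ℝ → Mat n} (hA : IsSwitchingLaw M A) (hΦ : IsFundamentalMatrix A Φ) (x : Vec n) :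
    AntitoneOn (fun t => trajSup M ((Φ t).act x)) (Ici 0) := fun _ hs _ _ hst =>
  Real.sSup_le (fun _ hr => le_csSup (h.bddAbove_trajNorms _)
    (trajNorms_act_subset hM hA hΦ hs hst x hr)) (trajSup_nonneg _)

end TrajSup

theorem sup_trajNorms_nonstrictCLF_general {n : ℕ}
    (M : Set (Mat n)) (hMne : M.Nonempty) (hM : Bornology.IsBounded M)
    (hstab : UniformlyStable M) :
    (∀ x : Vec n, BddAbove (trajNorms M x)) ∧
    ConvexOn ℝ univ (fun x : Vec n => sSup (trajNorms M x)) ∧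
    AbsHomog 1 (fun x : Vec n => sSup (trajNorms M x)) ∧
    IsNonstrictCLF M (fun x : Vec n => sSup (trajNorms M x)) := by
  refine ⟨hstab.bddAbove_trajNorms, hstab.trajSeminorm.convexOn, fun a x => ?_,
    hstab.continuous_trajSup, trajSup_nonneg, map_zero hstab.trajSeminorm,
    fun x hx => (norm_pos_iff.2 hx).trans_le (norm_le_trajSup hMne hstab x),
    fun A Φ hA hΦ x => hstab.antitoneOn_trajSup_act hM hA hΦ x⟩
  rw [Real.rpow_one]
  exact trajSup_smul a x

/-- If `𝓜` is bounded and `(Σ_𝓜)` is uniformly stable, then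
`V(x) = sup { ‖Φ_A(t,0)x‖ : t ≥ 0, A a switching law }` is finite-valued, convex,
absolutely homogeneous of degree one, and a nonstrict common Lyapunov function. -/
theorem sup_trajNorms_nonstrictCLF {n : ℕ} (hn : 1 ≤ n)
    (M : Set (Mat n)) (hMne : M.Nonempty) (hM : Bornology.IsBounded M)
    (hstab : UniformlyStable M) :
    (∀ x : Vec n, BddAbove (trajNorms M x)) ∧
    ConvexOn ℝ univ (fun x : Vec n => sSup (trajNorms M x)) ∧
    AbsHomog 1 (fun x : Vec n => sSup (trajNorms M x)) ∧
    IsNonstrictCLF M (fun x : Vec n => sSup (trajNorms M x)) :=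
  sup_trajNorms_nonstrictCLF_general M hMne hM hstab

end
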